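/- arXiv:1911.05775 — 2 statements merged into one kernel-verified Lean document; each statement's English description precedes it below -/
import Mathlib

section
/- Let B be a finite connected simple graph with vertex set V, m = #V ≥ 1, edge set E, and a fixed orientation o of its edges; for σ : E → Perm(Fin n) let G_σ be the associated degree-n cover on V × Fin n. For each n ∈ ℕ let μ_n be a probability measure on the finite set of functions σ : E → Perm(Fin n). Suppose that for every i ∈ ℕ there exist R ∈ ℕ and reals ν, ε > 0 and c > 0 such that for every n and all functions s, s' : V → {0,1,…,n} satisfying (a) s(v) ≤ s'(u) whenever u = v or u is adjacent to v in B, (b) Σ_v s'(v) ≤ (1+ν)·Σ_v s(v) and max_v s'(v) − min_v s(v) ≤ n/2, and (c) R ≤ Σ_v s(v) ≤ n·m/2 and min_v s(v) ≥ (1−ε)·max_v s(v), every pair of sets U ⊆ U' ⊆ V × Fin n with #U_v = s(v) and #U'_v = s'(v) for all v ∈ V satisfies μ_n{σ : Γ_{G_σ}(U) ⊆ U'} · ∏_{v∈V} C(n,s(v))·C(n, s'(v)−s(v)) ≤ c·n^{−i}. Then the family (μ_n) is pseudo-magnifying: for every i ∈ ℕ there exist γ > 0, R' ∈ ℕ and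 c' > 0 such that for all n, μ_n{σ : G_σ is not an (R',γ)-pseudo-magnifier} ≤ c'·n^{−i}. -/
open scoped BigOperators

/-- The neighbourhood `Γ_G(U)` of a vertex set `U`. -/
def nbhd {W : Type*} (G : SimpleGraph W) (U : Set W) : Set W :=
  {w | ∃ u ∈ U, G.Adj u w}

/-- `G` is an `(R,γ)`-pseudo-magnifier. -/
def IsPseudoMagnifier {W : Type*} [Fintype W] (G : SimpleGraph W) (R : ℕ) (γ : ℝ) : Prop :=
  ∀ U : Set W, R ≤ U.ncard → (U.ncard : ℝ) ≤ (Fintype.card W : ℝ) / 2 →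
    γ * (U.ncard : ℝ) ≤ (((nbhd G U) \ U).ncard : ℝ)

/-- The degree-`n` cover `G_σ` of `B` determined by an orientation `o` and a
permutation assignment `σ`. -/
def coverGraph {V : Type*} {B : SimpleGraph V} (o : B.edgeSet → V × V) (n : ℕ)
    (σ : B.edgeSet → Equiv.Perm (Fin n)) : SimpleGraph (V × Fin n) :=
  SimpleGraph.fromRel (fun p q => ∃ e : B.edgeSet, o e = (p.1, q.1) ∧ q.2 = (σ e) p.2)

/-- The size of the fibre of `U ⊆ V × Fin n` over `v ∈ V`. -/
noncomputable def fibCard {V : Type*} {n : ℕ} (U : Set (V × Fin n)) (v : V) : ℕ :=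
  {i : Fin n | (v, i) ∈ U}.ncard

open scoped Classical in
/-- The probability of the event `P` under the weight function `p` on a finite type. -/
noncomputable def prob {α : Type*} [Fintype α] (p : α → ℝ) (P : α → Prop) : ℝ :=
  ∑ x : α, if P x then p x else 0

/-!
A set `U` on which `G_σ` fails to magnify, together with `U' := U ∪ Γ(U)`, has fibre sizes
satisfying (a)–(c): along each edge of `B` the fibre sizes of `U` grow by at most
`g := #(Γ(U) \ U) < γ·#U`, so by connectivity they vary by at most `m·g`, which is small
compared with `#U ≤ m · max s`. Then take a union bound over such pairs, grouped by fibre-size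
profile: the hypothesis with exponent `k` bounds the probability of each pair by
`c·n^(-k) / ∏ C(n,s v)·C(n,s' v - s v)`, a profile has at most that product many pairs,
and the at most `(n+1)^(2m)` profiles are absorbed by taking `k = i + 2m`.
-/

open Finset

section Fibres

variable {V : Type*} {n : ℕ}

theorem fibCard_le (U : Set (V × Fin n)) (v : V) : fibCard U v ≤ n := by
  simpa [fibCard] using Set.ncard_le_card {i : Fin n | (v, i) ∈ U}

theorem fibCard_mono {U U' : Set (V × Fin n)} (h : U ⊆ U') (v : V) :
    fibCard U v ≤ fibCard U' v :=
  Set.ncard_le_ncard (fun _ hi => h hi) (Set.toFinite _)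

theorem fibCard_union_le (U U' : Set (V × Fin n)) (v : V) :
    fibCard (U ∪ U') v ≤ fibCard U v + fibCard U' v :=
  Set.ncard_union_le {i | (v, i) ∈ U} {i | (v, i) ∈ U'}

theorem fibCard_le_ncard [Finite V] (U : Set (V × Fin n)) (v : V) : fibCard U v ≤ U.ncard :=
  Set.ncard_le_ncard_of_injOn (Prod.mk v) (fun _ hi => hi) (Prod.mk_right_injective v).injOn

theorem fibCard_sdiff {U U' : Set (V × Fin n)} (h : U ⊆ U') (v : V) :
    fibCard (U' \ U) v = fibCard U' v - fibCard U v :=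
  Set.ncard_sdiff (s := {i | (v, i) ∈ U}) (fun _ hi => h hi)

theorem fibCard_union_le_add_ncard_sdiff [Finite V] (U N : Set (V × Fin n)) (v : V) :
    fibCard (U ∪ N) v ≤ fibCard U v + (N \ U).ncard := by
  rw [← Set.union_sdiff_self]
  exact (fibCard_union_le U (N \ U) v).trans (Nat.add_le_add_left (fibCard_le_ncard _ v) _)

theorem ncard_eq_sum_fibCard [Fintype V] (U : Set (V × Fin n)) :
    U.ncard = ∑ v, fibCard U v := by
  classical
  rw [Set.ncard_eq_toFinset_card', card_eq_sum_card_fiberwise (f := Prod.fst) (t := univ)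
    fun _ _ => mem_univ _]
  refine sum_congr rfl fun v _ => ?_
  rw [fibCard, Set.ncard_eq_toFinset_card', eq_comm,
    ← card_map ⟨Prod.mk v, Prod.mk_right_injective v⟩]
  congr 1
  ext ⟨u, i⟩
  aesop

end Fibres

section Cover

variable {V : Type*} {B : SimpleGraph V} {n : ℕ}

theorem exists_perm_coverGraph_adj {o : B.edgeSet → V × V}
    (ho : ∀ e : B.edgeSet, Sym2.mk (o e).1 (o e).2 = (e : Sym2 V))
    (σ : B.edgeSet → Equiv.Perm (Fin n)) {u v : V} (h : B.Adj u v) :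
    ∃ τ : Equiv.Perm (Fin n), ∀ i, (coverGraph o n σ).Adj (v, i) (u, τ i) := by
  set e : B.edgeSet := ⟨s(u, v), h⟩
  have hne (i j : Fin n) : (v, i) ≠ (u, j) := fun hvu => h.ne (congrArg Prod.fst hvu).symm
  rcases Sym2.eq_iff.mp (ho e) with ⟨h1, h2⟩ | ⟨h1, h2⟩
  · refine ⟨(σ e)⁻¹, fun i => ⟨hne _ _, Or.inr ⟨e, Prod.ext h1 h2, ?_⟩⟩⟩
    simp
  · exact ⟨σ e, fun i => ⟨hne _ _, Or.inl ⟨e, Prod.ext h1 h2, rfl⟩⟩⟩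

theorem fibCard_le_fibCard_nbhd {o : B.edgeSet → V × V}
    (ho : ∀ e : B.edgeSet, Sym2.mk (o e).1 (o e).2 = (e : Sym2 V))
    (σ : B.edgeSet → Equiv.Perm (Fin n)) {u v : V} (h : B.Adj u v) (U : Set (V × Fin n)) :
    fibCard U v ≤ fibCard (nbhd (coverGraph o n σ) U) u := by
  obtain ⟨τ, hτ⟩ := exists_perm_coverGraph_adj ho σ h
  exact Set.ncard_le_ncard_of_injOn τ (fun i hi => ⟨(v, i), hi, hτ i⟩) τ.injective.injOn

end Cover

theorem SimpleGraph.Walk.le_add_length_mul {V : Type*} {B : SimpleGraph V} {f : V → ℝ}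
    {g : ℝ} (h : ∀ u v, B.Adj u v → f u ≤ f v + g) {a b : V} (w : B.Walk a b) :
    f a ≤ f b + w.length * g := by
  induction w with
  | nil => simp
  | cons hadj w ih =>
    rw [SimpleGraph.Walk.length_cons, Nat.cast_succ]
    linarith [h _ _ hadj]

theorem SimpleGraph.Connected.le_add_card_mul {V : Type*} [Fintype V] {B : SimpleGraph V}
    (hB : B.Connected) {f : V → ℝ} {g : ℝ} (hg : 0 ≤ g)
    (h : ∀ u v, B.Adj u v → f u ≤ f v + g) (a b : V) :
    f a ≤ f b + Fintype.card V * g := by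
  classical
  obtain ⟨w⟩ := hB.preconnected a b
  have hlen : (w.toPath : B.Walk a b).length ≤ Fintype.card V := w.toPath.2.length_lt.le
  nlinarith [(w.toPath : B.Walk a b).le_add_length_mul h,
    mul_le_mul_of_nonneg_right (Nat.cast_le (α := ℝ).mpr hlen) hg]

section Profiles

variable {V : Type*} [Fintype V] [Nonempty V]

theorem sup'_sub_inf'_le_of_spread {s s' : V → ℕ} {g : ℝ} (hpt : ∀ v, (s' v : ℝ) ≤ s v + g)
    (hspread : ∀ a b, (s a : ℝ) ≤ s b + Fintype.card V * g) :
    ((univ.sup' univ_nonempty s' : ℕ) : ℝ) - ((univ.inf' univ_nonempty s : ℕ) : ℝ) ≤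
      (Fintype.card V + 1) * g := by
  obtain ⟨a, -, ha⟩ := exists_mem_eq_sup' univ_nonempty s'
  obtain ⟨b, -, hb⟩ := exists_mem_eq_inf' univ_nonempty s
  rw [ha, hb]
  linarith [hpt a, hspread a b]

theorem one_sub_mul_sup'_le_inf'_of_spread {s : V → ℕ} {g γ ε : ℝ} (hγ : 0 ≤ γ)
    (hspread : ∀ a b, (s a : ℝ) ≤ s b + Fintype.card V * g) (hg : g ≤ γ * ∑ v, (s v : ℝ))
    (hγε : γ * Fintype.card V ^ 2 ≤ ε) :
    (1 - ε) * ((univ.sup' univ_nonempty s : ℕ) : ℝ) ≤ ((univ.inf' univ_nonempty s : ℕ) : ℝ) := by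
  obtain ⟨a, -, ha⟩ := exists_mem_eq_sup' univ_nonempty s
  obtain ⟨b, -, hb⟩ := exists_mem_eq_inf' univ_nonempty s
  rw [ha, hb]
  have hsum : ∑ v, (s v : ℝ) ≤ Fintype.card V * s a := by
    simpa using sum_le_card_nsmul univ (fun v => (s v : ℝ)) (s a) fun v _ => by
      exact_mod_cast ha ▸ le_sup' s (mem_univ v)
  have hmg : Fintype.card V * g ≤ ε * s a := calc
    Fintype.card V * g ≤ Fintype.card V * (γ * (Fintype.card V * s a)) := by
      gcongr; exact hg.trans (by gcongr)
    _ = γ * Fintype.card V ^ 2 * s a := by ring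
    _ ≤ ε * s a := by gcongr
  linarith [hspread a b]

/-- Conditions (a), (b), (c) of the counting hypothesis on the fibre sizes `s`, `s'`. -/
def IsAdmissibleProfile (B : SimpleGraph V) (n R : ℕ) (ν ε : ℝ) (s s' : V → ℕ) : Prop :=
  (∀ u v : V, (u = v ∨ B.Adj u v) → s v ≤ s' u) ∧
  (∑ v, (s' v : ℝ)) ≤ (1 + ν) * ∑ v, (s v : ℝ) ∧
  ((univ.sup' univ_nonempty s' : ℕ) : ℝ) - ((univ.inf' univ_nonempty s : ℕ) : ℝ) ≤ (n : ℝ) / 2 ∧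
  R ≤ ∑ v, s v ∧
  (∑ v, (s v : ℝ)) ≤ (n : ℝ) * (Fintype.card V : ℝ) / 2 ∧
  (1 - ε) * ((univ.sup' univ_nonempty s : ℕ) : ℝ) ≤ ((univ.inf' univ_nonempty s : ℕ) : ℝ)

theorem isAdmissibleProfile_union_nbhd {B : SimpleGraph V} (hB : B.Connected)
    {o : B.edgeSet → V × V} (ho : ∀ e : B.edgeSet, Sym2.mk (o e).1 (o e).2 = (e : Sym2 V))
    {n : ℕ} (σ : B.edgeSet → Equiv.Perm (Fin n)) {R : ℕ} {γ ν ε : ℝ} (hγ : 0 ≤ γ)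
    (hγνε : γ * (Fintype.card V + 1) ^ 2 ≤ min ν (min ε 1)) {U : Set (V × Fin n)}
    (hR : R ≤ U.ncard) (hhalf : (U.ncard : ℝ) ≤ n * Fintype.card V / 2)
    (hg : ((nbhd (coverGraph o n σ) U \ U).ncard : ℝ) ≤ γ * U.ncard) :
    IsAdmissibleProfile B n R ν ε (fibCard U) (fibCard (U ∪ nbhd (coverGraph o n σ) U)) := by
  set m := Fintype.card V
  set N := nbhd (coverGraph o n σ) U
  have hsumU : (U.ncard : ℝ) = ∑ v, (fibCard U v : ℝ) := by
    exact_mod_cast ncard_eq_sum_fibCard U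
  have hsum : ∑ v, (fibCard (U ∪ N) v : ℝ) ≤ U.ncard + (N \ U).ncard := by
    rw [← Nat.cast_sum, ← ncard_eq_sum_fibCard, ← Set.union_sdiff_self]
    exact_mod_cast Set.ncard_union_le U (N \ U)
  have hpt (v : V) : (fibCard (U ∪ N) v : ℝ) ≤ fibCard U v + (N \ U).ncard := by
    exact_mod_cast fibCard_union_le_add_ncard_sdiff U N v
  set g : ℝ := ((N \ U).ncard : ℝ)
  have ha : ∀ u v, (u = v ∨ B.Adj u v) → fibCard U v ≤ fibCard (U ∪ N) u := by
    rintro u v (rfl | huv)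
    · exact fibCard_mono Set.subset_union_left u
    · exact (fibCard_le_fibCard_nbhd ho σ huv U).trans (fibCard_mono Set.subset_union_right u)
  have hspread : ∀ a b, (fibCard U a : ℝ) ≤ fibCard U b + m * g :=
    hB.le_add_card_mul (by positivity) fun u v huv =>
      (Nat.cast_le.mpr (ha v u (Or.inr huv.symm))).trans (hpt v)
  have hm : (0 : ℝ) ≤ m := Nat.cast_nonneg _
  have hU : (0 : ℝ) ≤ U.ncard := Nat.cast_nonneg _
  have hγν : γ ≤ ν :=
    (le_mul_of_one_le_right hγ (by nlinarith)).trans (hγνε.trans (min_le_left _ _))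
  have hγε : γ * m ^ 2 ≤ ε := (mul_le_mul_of_nonneg_left (by nlinarith) hγ).trans
    (hγνε.trans ((min_le_right _ _).trans (min_le_left _ _)))
  have hγ1 : γ * ((m + 1) * m) ≤ 1 := (mul_le_mul_of_nonneg_left (by nlinarith) hγ).trans
    (hγνε.trans ((min_le_right _ _).trans (min_le_right _ _)))
  refine ⟨ha, ?_, (sup'_sub_inf'_le_of_spread hpt hspread).trans ?_, ?_, hsumU ▸ hhalf,
    one_sub_mul_sup'_le_inf'_of_spread hγ hspread (hsumU ▸ hg) hγε⟩
  · rw [← hsumU]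
    nlinarith
  · calc (m + 1) * g ≤ (m + 1) * (γ * (n * m / 2)) := by gcongr; exact hg.trans (by gcongr)
      _ = γ * ((m + 1) * m) * (n / 2) := by ring
      _ ≤ n / 2 := by nlinarith [(by positivity : (0 : ℝ) ≤ n / 2)]
  · exact_mod_cast ncard_eq_sum_fibCard U ▸ hR

theorem exists_admissible_of_not_isPseudoMagnifier {B : SimpleGraph V} (hB : B.Connected)
    {o : B.edgeSet → V × V} (ho : ∀ e : B.edgeSet, Sym2.mk (o e).1 (o e).2 = (e : Sym2 V))
    {n : ℕ} (σ : B.edgeSet → Equiv.Perm (Fin n)) {R : ℕ} {γ ν ε : ℝ} (hγ : 0 ≤ γ)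
    (hγνε : γ * (Fintype.card V + 1) ^ 2 ≤ min ν (min ε 1))
    (h : ¬ IsPseudoMagnifier (coverGraph o n σ) R γ) :
    ∃ U U' : Set (V × Fin n), nbhd (coverGraph o n σ) U ⊆ U' ∧ U ⊆ U' ∧
      IsAdmissibleProfile B n R ν ε (fibCard U) (fibCard U') := by
  simp only [IsPseudoMagnifier, not_forall, not_le, exists_prop] at h
  obtain ⟨U, hR, hhalf, hsmall⟩ := h
  refine ⟨U, _, Set.subset_union_right, Set.subset_union_left,
    isAdmissibleProfile_union_nbhd hB ho σ hγ hγνε hR ?_ hsmall.le⟩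
  simpa [Fintype.card_prod, mul_comm] using hhalf

end Profiles

section Counting

variable {V : Type*} [Fintype V] {n : ℕ}

open scoped Classical in
theorem card_fibCard_eq_le (s : V → ℕ) :
    #{U : Set (V × Fin n) | fibCard U = s} ≤ ∏ v, n.choose (s v) := by
  calc _ ≤ #(Fintype.piFinset fun v => powersetCard (s v) (univ : Finset (Fin n))) := by
        refine card_le_card_of_injOn (fun U v => {i | (v, i) ∈ U}.toFinset)
          (fun U hU => ?_) fun U _ U' _ hUU' => ?_
        · rw [mem_coe, Fintype.mem_piFinset]
          intro v
          rw [mem_powersetCard_univ, ← Set.ncard_eq_toFinset_card']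
          exact congrFun (mem_filter.mp (mem_coe.mp hU)).2 v
        · ext ⟨v, i⟩
          simpa using congrArg (i ∈ ·) (congrFun hUU' v)
    _ = _ := by simp [Fintype.card_piFinset]

open scoped Classical in
noncomputable def pairsWithProfile (n : ℕ) (s s' : V → ℕ) :
    Finset (Set (V × Fin n) × Set (V × Fin n)) :=
  {w | w.1 ⊆ w.2 ∧ fibCard w.1 = s ∧ fibCard w.2 = s'}

theorem card_pairsWithProfile_le (s s' : V → ℕ) :
    #(pairsWithProfile n s s') ≤ ∏ v, n.choose (s v) * n.choose (s' v - s v) := by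
  classical
  have hinj : Set.InjOn (fun w : Set (V × Fin n) × Set (V × Fin n) => (w.1, w.2 \ w.1))
      (pairsWithProfile n s s') := fun w hw w' hw' hww' => by
    simp only [pairsWithProfile, coe_filter, mem_univ, true_and, Set.mem_ofPred_eq] at hw hw'
    obtain ⟨h1, h2⟩ := Prod.mk.inj hww'
    refine Prod.ext h1 ?_
    rw [← Set.union_sdiff_cancel hw.1, ← Set.union_sdiff_cancel hw'.1, h2, h1]
  calc #(pairsWithProfile n s s')
      ≤ #(({U | fibCard U = s} : Finset (Set (V × Fin n))) ×ˢ
          ({D | fibCard D = s' - s} : Finset (Set (V × Fin n)))) := by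
        refine card_le_card_of_injOn _ (fun w hw => ?_) hinj
        simp only [pairsWithProfile, coe_filter, mem_univ, true_and, Set.mem_ofPred_eq] at hw
        simp only [coe_product, coe_filter, mem_univ, true_and, Set.mem_prod, Set.mem_ofPred_eq]
        refine ⟨hw.2.1, funext fun v => ?_⟩
        rw [fibCard_sdiff hw.1, hw.2.1, hw.2.2, Pi.sub_apply]
    _ ≤ ∏ v, n.choose (s v) * n.choose (s' v - s v) := by
        rw [card_product, prod_mul_distrib]
        exact Nat.mul_le_mul (card_fibCard_eq_le s) (card_fibCard_eq_le (s' - s))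

theorem sum_pairsWithProfile_le {s s' : V → ℕ} {f : Set (V × Fin n) × Set (V × Fin n) → ℝ}
    {K : ℝ} (hK : 0 ≤ K)
    (hf : ∀ w ∈ pairsWithProfile n s s',
      f w * ∏ v, ((n.choose (s v) : ℝ) * (n.choose (s' v - s v) : ℝ)) ≤ K) :
    ∑ w ∈ pairsWithProfile n s s', f w ≤ K := by
  have hcard := card_pairsWithProfile_le (n := n) s s'
  set N := ∏ v, n.choose (s v) * n.choose (s' v - s v)
  rcases Nat.eq_zero_or_pos N with hN | hN
  · have hempty : pairsWithProfile n s s' = ∅ := card_eq_zero.mp (by omega)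
    rw [hempty, sum_empty]
    exact hK
  have hN' : (0 : ℝ) < N := Nat.cast_pos.mpr hN
  calc ∑ w ∈ pairsWithProfile n s s', f w ≤ #(pairsWithProfile n s s') • (K / N) :=
        sum_le_card_nsmul _ _ _ fun w hw => (le_div_iff₀ hN').mpr (by simpa [N] using hf w hw)
    _ ≤ N * (K / N) := by rw [nsmul_eq_mul]; gcongr
    _ = K := mul_div_cancel₀ K hN'.ne'

end Counting

theorem prob_le_sum_prob {α ι : Type*} [Fintype α] {p : α → ℝ} (hp : ∀ x, 0 ≤ p x)
    {P : α → Prop} {Q : ι → α → Prop} (J : Finset ι) (h : ∀ x, P x → ∃ j ∈ J, Q j x) :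
    prob p P ≤ ∑ j ∈ J, prob p (Q j) := by
  classical
  unfold prob
  rw [sum_comm]
  refine sum_le_sum fun x _ => ?_
  split_ifs with hx
  · obtain ⟨j, hj, hQ⟩ := h x hx
    exact (if_pos hQ).symm.le.trans (single_le_sum (f := fun j => if Q j x then p x else 0)
      (fun j _ => ite_nonneg (hp x) le_rfl) hj)
  · exact sum_nonneg fun j _ => ite_nonneg (hp x) le_rfl

theorem prob_not_isPseudoMagnifier_le {V : Type*} [Fintype V] [DecidableEq V] [Nonempty V]
    {B : SimpleGraph V} [DecidableRel B.Adj] (hB : B.Connected) {o : B.edgeSet → V × V}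
    (ho : ∀ e : B.edgeSet, Sym2.mk (o e).1 (o e).2 = (e : Sym2 V)) {n : ℕ}
    {p : (B.edgeSet → Equiv.Perm (Fin n)) → ℝ} (hp : ∀ σ, 0 ≤ p σ) {R : ℕ} {γ ν ε K : ℝ}
    (hγ : 0 ≤ γ) (hγνε : γ * (Fintype.card V + 1) ^ 2 ≤ min ν (min ε 1)) (hK : 0 ≤ K)
    (hcount : ∀ s s' : V → ℕ, (∀ v, s v ≤ n) → (∀ v, s' v ≤ n) →
      IsAdmissibleProfile B n R ν ε s s' →
      ∀ U U' : Set (V × Fin n), U ⊆ U' → (∀ v, fibCard U v = s v) → (∀ v, fibCard U' v = s' v) →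
        prob p (fun σ => nbhd (coverGraph o n σ) U ⊆ U') *
          ∏ v, ((n.choose (s v) : ℝ) * (n.choose (s' v - s v) : ℝ)) ≤ K) :
    prob p (fun σ => ¬IsPseudoMagnifier (coverGraph o n σ) R γ) ≤
      ((n : ℝ) + 1) ^ (2 * Fintype.card V) * K := by
  classical
  set T := ((Fintype.piFinset fun _ : V => range (n + 1)) ×ˢ
    (Fintype.piFinset fun _ : V => range (n + 1))).filter
    fun t => IsAdmissibleProfile B n R ν ε t.1 t.2
  have hT : #T ≤ (n + 1) ^ (2 * Fintype.card V) := (card_filter_le _ _).trans_eq (by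
    simp [card_product, Fintype.card_piFinset, two_mul, pow_add])
  calc prob p (fun σ => ¬IsPseudoMagnifier (coverGraph o n σ) R γ)
      ≤ ∑ t ∈ T, prob p fun σ =>
          ∃ w ∈ pairsWithProfile n t.1 t.2, nbhd (coverGraph o n σ) w.1 ⊆ w.2 := by
        refine prob_le_sum_prob hp T fun σ hσ => ?_
        obtain ⟨U, U', hN, hsub, hadm⟩ :=
          exists_admissible_of_not_isPseudoMagnifier hB ho σ hγ hγνε hσ
        refine ⟨(fibCard U, fibCard U'), ?_, (U, U'), ?_, hN⟩
        · simp [T, hadm, fibCard_le]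
        · simp [pairsWithProfile, hsub]
    _ ≤ ∑ t ∈ T, ∑ w ∈ pairsWithProfile n t.1 t.2,
          prob p fun σ => nbhd (coverGraph o n σ) w.1 ⊆ w.2 :=
        sum_le_sum fun t _ => prob_le_sum_prob hp _ fun _ => id
    _ ≤ ∑ _t ∈ T, K := by
        refine sum_le_sum fun t ht => sum_pairsWithProfile_le hK fun w hw => ?_
        obtain ⟨hsub, h₁, h₂⟩ : w.1 ⊆ w.2 ∧ fibCard w.1 = t.1 ∧ fibCard w.2 = t.2 := by
          simpa [pairsWithProfile] using hw
        exact hcount t.1 t.2 (h₁ ▸ fibCard_le w.1) (h₂ ▸ fibCard_le w.2) (mem_filter.mp ht).2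
          w.1 w.2 hsub (congrFun h₁) (congrFun h₂)
    _ = #T * K := by rw [sum_const, nsmul_eq_mul]
    _ ≤ ((n : ℝ) + 1) ^ (2 * Fintype.card V) * K := by gcongr; exact_mod_cast hT

theorem succ_pow_mul_div_pow_le (n m i : ℕ) {c : ℝ} (hc : 0 ≤ c) :
    ((n : ℝ) + 1) ^ (2 * m) * (c / (n : ℝ) ^ (i + 2 * m)) ≤ 4 ^ m * c / (n : ℝ) ^ i := by
  rcases Nat.eq_zero_or_pos n with rfl | hn
  -- at `n = 0` both sides divide by powers of `0`, and `x / 0 = 0`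
  · rcases m with _ | m
    · simp
    · simp only [Nat.cast_zero, zero_add, one_pow, one_mul]
      rw [zero_pow (by omega), div_zero]
      positivity
  have hn' : (0 : ℝ) < n := Nat.cast_pos.mpr hn
  calc ((n : ℝ) + 1) ^ (2 * m) * (c / (n : ℝ) ^ (i + 2 * m))
      ≤ (2 * n) ^ (2 * m) * (c / (n : ℝ) ^ (i + 2 * m)) := by
        gcongr; linarith [(Nat.one_le_cast (α := ℝ)).mpr hn]
    _ = 4 ^ m * c / (n : ℝ) ^ i := by
        rw [mul_pow, pow_mul, pow_add]; norm_num; field_simp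

theorem counting_lemma_implies_pseudo_magnifying_general
    {V : Type} [Fintype V] [DecidableEq V] [Nonempty V]
    (B : SimpleGraph V) [DecidableRel B.Adj] (hconn : B.Connected)
    (o : B.edgeSet → V × V)
    (ho : ∀ e : B.edgeSet, Sym2.mk (o e).1 (o e).2 = (e : Sym2 V))
    (p : (n : ℕ) → (B.edgeSet → Equiv.Perm (Fin n)) → ℝ)
    (hp0 : ∀ n σ, 0 ≤ p n σ)
    (hyp : ∀ i : ℕ, ∃ (R : ℕ) (ν ε c : ℝ), 0 < ν ∧ 0 < ε ∧ 0 < c ∧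
      ∀ n : ℕ, ∀ s s' : V → ℕ,
        (∀ v, s v ≤ n) → (∀ v, s' v ≤ n) →
        -- (a)
        (∀ u v : V, (u = v ∨ B.Adj u v) → s v ≤ s' u) →
        -- (b)
        ((∑ v : V, (s' v : ℝ)) ≤ (1 + ν) * ∑ v : V, (s v : ℝ)) →
        (((Finset.univ.sup' Finset.univ_nonempty s' : ℕ) : ℝ) -
          ((Finset.univ.inf' Finset.univ_nonempty s : ℕ) : ℝ) ≤ (n : ℝ) / 2) →
        -- (c)
        (R ≤ ∑ v : V, s v) →
        ((∑ v : V, (s v : ℝ)) ≤ (n : ℝ) * (Fintype.card V : ℝ) / 2) →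
        ((1 - ε) * ((Finset.univ.sup' Finset.univ_nonempty s : ℕ) : ℝ) ≤
          ((Finset.univ.inf' Finset.univ_nonempty s : ℕ) : ℝ)) →
        ∀ U U' : Set (V × Fin n), U ⊆ U' →
          (∀ v, fibCard U v = s v) → (∀ v, fibCard U' v = s' v) →
          prob (p n) (fun σ => nbhd (coverGraph o n σ) U ⊆ U') *
              ∏ v : V, ((n.choose (s v) : ℝ) * (n.choose (s' v - s v) : ℝ)) ≤
            c / (n : ℝ) ^ i) :
    ∀ i : ℕ, ∃ (γ : ℝ) (R' : ℕ) (c' : ℝ), 0 < γ ∧ 0 < c' ∧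
      ∀ n : ℕ,
        prob (p n) (fun σ => ¬ IsPseudoMagnifier (coverGraph o n σ) R' γ) ≤
          c' / (n : ℝ) ^ i := by
  intro i
  set m := Fintype.card V
  obtain ⟨R, ν, ε, c, hν, hε, hc, hcount⟩ := hyp (i + 2 * m)
  set γ := min ν (min ε 1) / ((m : ℝ) + 1) ^ 2
  have hγ : 0 < γ := by positivity
  refine ⟨γ, R, 4 ^ m * c, hγ, by positivity, fun n => ?_⟩
  calc prob (p n) (fun σ => ¬IsPseudoMagnifier (coverGraph o n σ) R γ)
      ≤ ((n : ℝ) + 1) ^ (2 * m) * (c / (n : ℝ) ^ (i + 2 * m)) :=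
        prob_not_isPseudoMagnifier_le hconn ho (hp0 n) hγ.le
          (div_mul_cancel₀ _ (by positivity)).le (by positivity)
          fun s s' hs hs' ⟨ha, hb₁, hb₂, hc₁, hc₂, hc₃⟩ =>
            hcount n s s' hs hs' ha hb₁ hb₂ hc₁ hc₂ hc₃
    _ ≤ 4 ^ m * c / (n : ℝ) ^ i := succ_pow_mul_div_pow_le n m i hc.le

/-- The counting lemma: if a family `(μ_n)` of probability measures on permutation
assignments over a finite connected base graph `B` satisfies, for every `i`, a
counting bound of the form
`μ_n{Γ_{G_σ}(U) ⊆ U'} · ∏_v C(n,s(v))·C(n,s'(v)−s(v)) ≤ c·n^{−i}`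
for all fibre-size data `s, s'` satisfying conditions (a), (b), (c), then the
family `(μ_n)` is pseudo-magnifying. -/
theorem counting_lemma_implies_pseudo_magnifying
    {V : Type} [Fintype V] [DecidableEq V] [Nonempty V]
    (B : SimpleGraph V) [DecidableRel B.Adj] (hconn : B.Connected)
    (o : B.edgeSet → V × V)
    (ho : ∀ e : B.edgeSet, Sym2.mk (o e).1 (o e).2 = (e : Sym2 V))
    (p : (n : ℕ) → (B.edgeSet → Equiv.Perm (Fin n)) → ℝ)
    (hp0 : ∀ n σ, 0 ≤ p n σ)
    (hp1 : ∀ n, ∑ σ : B.edgeSet → Equiv.Perm (Fin n), p n σ = 1)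
    (hyp : ∀ i : ℕ, ∃ (R : ℕ) (ν ε c : ℝ), 0 < ν ∧ 0 < ε ∧ 0 < c ∧
      ∀ n : ℕ, ∀ s s' : V → ℕ,
        (∀ v, s v ≤ n) → (∀ v, s' v ≤ n) →
        -- (a)
        (∀ u v : V, (u = v ∨ B.Adj u v) → s v ≤ s' u) →
        -- (b)
        ((∑ v : V, (s' v : ℝ)) ≤ (1 + ν) * ∑ v : V, (s v : ℝ)) →
        (((Finset.univ.sup' Finset.univ_nonempty s' : ℕ) : ℝ) -
          ((Finset.univ.inf' Finset.univ_nonempty s : ℕ) : ℝ) ≤ (n : ℝ) / 2) →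
        -- (c)
        (R ≤ ∑ v : V, s v) →
        ((∑ v : V, (s v : ℝ)) ≤ (n : ℝ) * (Fintype.card V : ℝ) / 2) →
        ((1 - ε) * ((Finset.univ.sup' Finset.univ_nonempty s : ℕ) : ℝ) ≤
          ((Finset.univ.inf' Finset.univ_nonempty s : ℕ) : ℝ)) →
        ∀ U U' : Set (V × Fin n), U ⊆ U' →
          (∀ v, fibCard U v = s v) → (∀ v, fibCard U' v = s' v) →
          prob (p n) (fun σ => nbhd (coverGraph o n σ) U ⊆ U') *
              ∏ v : V, ((n.choose (s v) : ℝ) * (n.choose (s' v - s v) : ℝ)) ≤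
            c / (n : ℝ) ^ i) :
    ∀ i : ℕ, ∃ (γ : ℝ) (R' : ℕ) (c' : ℝ), 0 < γ ∧ 0 < c' ∧
      ∀ n : ℕ,
        prob (p n) (fun σ => ¬ IsPseudoMagnifier (coverGraph o n σ) R' γ) ≤
          c' / (n : ℝ) ^ i :=
  counting_lemma_implies_pseudo_magnifying_general B hconn o ho p hp0 hyp
end

section
/- Let n, t ∈ ℕ with t even and 2 ≤ t ≤ n. Then, as inequalities of rationals, ((n−t)/n)·C(n,t) ≤ (binom(n,t)_odd)² ≤ t·C(n,t). -/
/-!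
Write `t = 2m` and split the falling factorial `n (n-1) ⋯ (n-t+1)` into its even part
`E n = n (n-2) ⋯ (n-2m+2)` and its odd part `O n = (n-1) (n-3) ⋯ (n-2m+1)`. Then
`C(n,t) = E n · O n / (E t · O t)` and `binom(n,t)_odd = O n / O t`, so
`binom(n,t)_odd² / C(n,t) = (O n / E n) · (E t / O t)`.
The factorwise inequality `(n-2i)(t-2i-1) ≤ (n-2i-1)(t-2i)` (equivalent to `t ≤ n`) makes this
ratio at least `1`, while `O n ≤ E n` and `E t = t (t-2) ⋯ 2 ≤ t · (t-1) (t-3) ⋯ 1 = t · O t`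
bound it by `t`.
-/

open scoped BigOperators

/-- The odd binomial coefficient `binom(n,t)_odd = ((n−1)(n−3)⋯(n−t+1))/((t−1)(t−3)⋯1)`,
for `t` even, where numerator and denominator each have `t/2` factors. -/
noncomputable def oddBinom (n t : ℕ) : ℚ :=
  (∏ i ∈ Finset.range (t / 2), ((n : ℚ) - (2 * i + 1))) /
    (∏ i ∈ Finset.range (t / 2), ((t : ℚ) - (2 * i + 1)))

open Finset

section FallingProducts

variable {R : Type*} [CommRing R]

def evenFalling (x : R) (m : ℕ) : R := ∏ i ∈ range m, (x - 2 * i)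

def oddFalling (x : R) (m : ℕ) : R := ∏ i ∈ range m, (x - (2 * i + 1))

theorem evenFalling_mul_oddFalling (x : R) (m : ℕ) :
    evenFalling x m * oddFalling x m = ∏ j ∈ range (2 * m), (x - j) := by
  induction m with
  | zero => simp [evenFalling, oddFalling]
  | succ m ih =>
    rw [Nat.mul_succ, prod_range_succ, prod_range_succ, ← ih]
    simp only [evenFalling, oddFalling, prod_range_succ]
    push_cast
    ring

theorem descFactorial_two_mul_eq (n m : ℕ) :
    (n.descFactorial (2 * m) : R) = evenFalling (n : R) m * oddFalling (n : R) m := by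
  rw [evenFalling_mul_oddFalling, ← descPochhammer_eval_eq_descFactorial,
    descPochhammer_eval_eq_prod_range]

theorem choose_two_mul_mul_eq (n m : ℕ) :
    (n.choose (2 * m) : R) * (evenFalling ((2 * m : ℕ) : R) m * oddFalling ((2 * m : ℕ) : R) m) =
      evenFalling (n : R) m * oddFalling (n : R) m := by
  rw [← descFactorial_two_mul_eq, ← descFactorial_two_mul_eq, Nat.descFactorial_self,
    Nat.descFactorial_eq_factorial_mul_choose]
  push_cast
  ring

variable [LinearOrder R] [IsStrictOrderedRing R] {x y : R} {m : ℕ}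

private theorem two_mul_add_one_le_of_mem_range {i : ℕ} (hi : i ∈ range m) :
    2 * (i : R) + 1 ≤ 2 * m - 1 := by
  have : (i : R) + 1 ≤ m := by exact_mod_cast mem_range.mp hi
  linarith

theorem oddFalling_pos (hx : 2 * (m : R) - 1 < x) : 0 < oddFalling x m :=
  prod_pos fun i hi => by linarith [two_mul_add_one_le_of_mem_range (R := R) hi]

theorem oddFalling_le_evenFalling (hx : 2 * (m : R) - 1 ≤ x) :
    oddFalling x m ≤ evenFalling x m :=
  prod_le_prod (fun i hi => by linarith [two_mul_add_one_le_of_mem_range (R := R) hi])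
    fun _ _ => by linarith

theorem evenFalling_mul_oddFalling_le (hy : 2 * (m : R) - 1 ≤ y) (hyx : y ≤ x) :
    evenFalling x m * oddFalling y m ≤ oddFalling x m * evenFalling y m := by
  simp only [evenFalling, oddFalling, ← prod_mul_distrib]
  refine prod_le_prod (fun i hi => ?_) fun i hi => ?_
  all_goals have := two_mul_add_one_le_of_mem_range (R := R) hi
  · exact mul_nonneg (by linarith) (by linarith)
  · nlinarith

theorem evenFalling_two_mul_le (hm : m ≠ 0) :
    evenFalling ((2 * m : ℕ) : R) m ≤ (2 * m : ℕ) * oddFalling ((2 * m : ℕ) : R) m := by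
  obtain ⟨k, rfl⟩ := Nat.exists_eq_succ_of_ne_zero hm
  set t : R := ((2 * (k + 1) : ℕ) : R) with ht
  -- Split off the factor `t` (at `i = 0`) of `E t` and the factor `1` (at `i = k`) of `O t`.
  rw [evenFalling, oddFalling, prod_range_succ', prod_range_succ]
  have hlast : t - (2 * k + 1) = 1 := by rw [ht]; push_cast; ring
  rw [Nat.cast_zero, mul_zero, sub_zero, hlast, mul_one, mul_comm]
  refine mul_le_mul_of_nonneg_left (prod_le_prod (fun i hi => ?_) fun i _ => ?_) (by positivity)
  · have : i + 1 ≤ k := mem_range.mp hi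
    have : 2 * ((i + 1 : ℕ) : R) ≤ t := by rw [ht]; exact_mod_cast (by omega)
    exact sub_nonneg.mpr this
  · push_cast
    linarith

end FallingProducts

theorem oddBinom_two_mul (n m : ℕ) :
    oddBinom n (2 * m) = oddFalling (n : ℚ) m / oddFalling ((2 * m : ℕ) : ℚ) m := by
  rw [oddBinom, Nat.mul_div_cancel_left m two_pos]
  rfl

section Estimates

variable {n m : ℕ} (h : 2 * m ≤ n)
include h

private theorem cast_two_mul_bounds :
    2 * (m : ℚ) - 1 < ((2 * m : ℕ) : ℚ) ∧ ((2 * m : ℕ) : ℚ) ≤ n ∧ 2 * (m : ℚ) - 1 < n := by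
  have : ((2 * m : ℕ) : ℚ) ≤ n := by exact_mod_cast h
  push_cast at this ⊢
  exact ⟨by linarith, this, by linarith⟩

theorem choose_le_oddBinom_sq : (n.choose (2 * m) : ℚ) ≤ oddBinom n (2 * m) ^ 2 := by
  obtain ⟨ht, htn, hn⟩ := cast_two_mul_bounds h
  have hOt := oddFalling_pos ht
  have hOn := oddFalling_pos hn
  have hEt := hOt.trans_le (oddFalling_le_evenFalling ht.le)
  have hC := choose_two_mul_mul_eq (R := ℚ) n m
  have hratio := evenFalling_mul_oddFalling_le ht.le htn
  rw [oddBinom_two_mul, div_pow, le_div_iff₀ (by positivity)]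
  refine le_of_mul_le_mul_right ?_ hEt
  calc _ = oddFalling (n : ℚ) m * (evenFalling (n : ℚ) m * oddFalling ((2 * m : ℕ) : ℚ) m) := by
        linear_combination oddFalling ((2 * m : ℕ) : ℚ) m * hC
    _ ≤ oddFalling (n : ℚ) m * (oddFalling (n : ℚ) m * evenFalling ((2 * m : ℕ) : ℚ) m) := by
        gcongr
    _ = _ := by ring

theorem oddBinom_sq_le_mul_choose (hm : m ≠ 0) :
    oddBinom n (2 * m) ^ 2 ≤ (2 * m : ℕ) * (n.choose (2 * m) : ℚ) := by
  obtain ⟨ht, -, hn⟩ := cast_two_mul_bounds h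
  have hOt := oddFalling_pos ht
  have hOn := oddFalling_pos hn
  have hEt := hOt.trans_le (oddFalling_le_evenFalling ht.le)
  have hC := choose_two_mul_mul_eq (R := ℚ) n m
  have hEn := oddFalling_le_evenFalling hn.le
  have hEt_le := evenFalling_two_mul_le (R := ℚ) hm
  rw [oddBinom_two_mul, div_pow, div_le_iff₀ (by positivity)]
  refine le_of_mul_le_mul_right ?_ hEt
  calc _ = oddFalling (n : ℚ) m * oddFalling (n : ℚ) m * evenFalling ((2 * m : ℕ) : ℚ) m := by ring
    _ ≤ oddFalling (n : ℚ) m * evenFalling (n : ℚ) m *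
          ((2 * m : ℕ) * oddFalling ((2 * m : ℕ) : ℚ) m) :=
        mul_le_mul (mul_le_mul_of_nonneg_left hEn hOn.le) hEt_le hEt.le
          (mul_pos hOn (hOn.trans_le hEn)).le
    _ = _ := by
        linear_combination (-((2 * m : ℕ) * oddFalling ((2 * m : ℕ) : ℚ) m)) * hC

end Estimates

/-- For `t` even with `2 ≤ t ≤ n`:
`((n−t)/n)·C(n,t) ≤ (binom(n,t)_odd)² ≤ t·C(n,t)`. -/
theorem oddBinom_sq_estimates (n t : ℕ) (ht : Even t) (ht2 : 2 ≤ t) (htn : t ≤ n) :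
    ((n : ℚ) - (t : ℚ)) / (n : ℚ) * (n.choose t : ℚ) ≤ (oddBinom n t) ^ 2 ∧
      (oddBinom n t) ^ 2 ≤ (t : ℚ) * (n.choose t : ℚ) := by
  obtain ⟨m, rfl⟩ := ht.two_dvd
  refine ⟨?_, oddBinom_sq_le_mul_choose htn (by omega)⟩
  have hfrac : ((n : ℚ) - (2 * m : ℕ)) / n ≤ 1 := div_le_one_of_le₀ (by simp) (by positivity)
  calc ((n : ℚ) - (2 * m : ℕ)) / n * n.choose (2 * m) ≤ 1 * n.choose (2 * m) := by gcongr
    _ ≤ _ := by simpa using choose_le_oddBinom_sq htn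
end
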